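/- Let (M; φ, ξ, η, g) be a quasi-𝒦-cosymplectic manifold (P(X,Y) = η(Y)∇_{φX} ξ). Then for every vector field X with η(X) = 0, the bracket [X, φX] also satisfies η([X, φX]) = 0, i.e. M is φ-involutive. -/
import Mathlib



/-- Algebraic model of an almost contact metric manifold: `C` plays the role of the
ring of smooth functions, `V` the `C`-module of vector fields, `g` the Riemannian
metric, `phi` the (1,1)-tensor field, `xi` the Reeb vector field and `eta` the 1-form. -/
structure ACMM (C : Type) [CommRing C] (V : Type) [AddCommGroup V] [Module C V] where
  g : V → V → C
  phi : V → V
  xi : V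
  eta : V → C
  g_symm : ∀ X Y, g X Y = g Y X
  g_add_left : ∀ X Y Z, g (X + Y) Z = g X Z + g Y Z
  g_smul_left : ∀ (k : C) (X Y : V), g (k • X) Y = k * g X Y
  phi_add : ∀ X Y, phi (X + Y) = phi X + phi Y
  phi_smul : ∀ (k : C) (X : V), phi (k • X) = k • phi X
  eta_add : ∀ X Y, eta (X + Y) = eta X + eta Y
  eta_smul : ∀ (k : C) (X : V), eta (k • X) = k * eta X
  phi_sq : ∀ X, phi (phi X) = -X + eta X • xi
  eta_xi : eta xi = 1
  compat : ∀ X Y, g (phi X) (phi Y) = g X Y - eta X * eta Y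

/-- An almost contact metric manifold together with its Levi-Civita connection `nabla`
(torsion-free, metric), the Lie bracket of vector fields, the directional derivative
`act` of functions, and the exterior derivative `dEta` of `eta`
(characterised by `2 dη(X,Y) = X η(Y) - Y η(X) - η [X,Y]`). -/
structure ACMMConn (C : Type) [CommRing C] (V : Type) [AddCommGroup V] [Module C V]
    extends ACMM C V where
  act : V → C → C
  bracket : V → V → V
  nabla : V → V → V
  act_add : ∀ (X : V) (a b : C), act X (a + b) = act X a + act X b
  act_mul : ∀ (X : V) (a b : C), act X (a * b) = a * act X b + b * act X a
  act_add_left : ∀ (X Y : V) (a : C), act (X + Y) a = act X a + act Y a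
  act_smul_left : ∀ (k : C) (X : V) (a : C), act (k • X) a = k * act X a
  nabla_add_left : ∀ X Y Z, nabla (X + Y) Z = nabla X Z + nabla Y Z
  nabla_smul_left : ∀ (k : C) (X Y : V), nabla (k • X) Y = k • nabla X Y
  nabla_add_right : ∀ X Y Z, nabla X (Y + Z) = nabla X Y + nabla X Z
  nabla_leibniz : ∀ (X : V) (k : C) (Y : V), nabla X (k • Y) = act X k • Y + k • nabla X Y
  torsion_free : ∀ X Y, nabla X Y - nabla Y X = bracket X Y
  metric_compat : ∀ X Y Z, act X (g Y Z) = g (nabla X Y) Z + g Y (nabla X Z)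
  dEta : V → V → C
  dEta_spec : ∀ X Y, 2 * dEta X Y = act X (eta Y) - act Y (eta X) - eta (bracket X Y)

variable {C : Type} [CommRing C] {V : Type} [AddCommGroup V] [Module C V]

/-- `(∇_X φ) Y = ∇_X (φ Y) - φ (∇_X Y)`. -/
def ACMMConn.nablaPhi (A : ACMMConn C V) (X Y : V) : V :=
  A.nabla X (A.phi Y) - A.phi (A.nabla X Y)

/-- `P(X,Y) = (∇_X φ)Y + (∇_{φX} φ)(φY)`. -/
def ACMMConn.P (A : ACMMConn C V) (X Y : V) : V :=
  A.nablaPhi X Y + A.nablaPhi (A.phi X) (A.phi Y)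

/-- `Q(X,Y) = (∇_X φ)Y + (∇_Y φ)X`. -/
def ACMMConn.Q (A : ACMMConn C V) (X Y : V) : V :=
  A.nablaPhi X Y + A.nablaPhi Y X

/-- `S(X,Y) = (∇_X φ)Y - (∇_Y φ)X`. -/
def ACMMConn.S (A : ACMMConn C V) (X Y : V) : V :=
  A.nablaPhi X Y - A.nablaPhi Y X

/-- `W(X,Y) = ∇_X Y + ∇_{φX} (φY)`. -/
def ACMMConn.W (A : ACMMConn C V) (X Y : V) : V :=
  A.nabla X Y + A.nabla (A.phi X) (A.phi Y)

section AuxStmt12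
variable {C : Type} [CommRing C] {V : Type} [AddCommGroup V] [Module C V]

lemma ACMMConn.eta_zero' (A : ACMMConn C V) : A.eta 0 = 0 := by
  have h := A.eta_smul 0 0
  simpa using h

lemma ACMMConn.phi_neg' (A : ACMMConn C V) (X : V) : A.phi (-X) = -A.phi X := by
  have h := A.phi_smul (-1) X
  simpa using h

lemma ACMMConn.phi_sub' (A : ACMMConn C V) (X Y : V) :
    A.phi (X - Y) = A.phi X - A.phi Y := by
  rw [sub_eq_add_neg, A.phi_add, A.phi_neg', sub_eq_add_neg]

lemma ACMMConn.smul_xi_eq_zero' (A : ACMMConn C V) {k : C} (h : k • A.xi = 0) : k = 0 := by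
  have h1 := A.eta_smul k A.xi
  rw [h, A.eta_xi, mul_one, A.eta_zero'] at h1
  exact h1.symm

lemma ACMMConn.nabla_zero_right' (A : ACMMConn C V) (X : V) : A.nabla X 0 = 0 := by
  have h := A.nabla_add_right X 0 0
  simpa using h.symm

lemma ACMMConn.nabla_neg_right' (A : ACMMConn C V) (X Y : V) :
    A.nabla X (-Y) = -A.nabla X Y := by
  have h := A.nabla_add_right X Y (-Y)
  rw [add_neg_cancel, A.nabla_zero_right'] at h
  exact eq_neg_of_add_eq_zero_left (by rw [add_comm]; exact h.symm)

end AuxStmt12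

/-- a quasi-𝒦-cosymplectic manifold (`P(X,Y) = η(Y) ∇_{φX} ξ`) is
`φ`-involutive: `η([X, φX]) = 0` for every `X` with `η(X) = 0`. -/
theorem stmt12 (A : ACMMConn C V)
    (hqc : ∀ X Y : V, A.P X Y = A.eta Y • A.nabla (A.phi X) A.xi) :
    ∀ X : V, A.eta X = 0 → A.eta (A.bracket X (A.phi X)) = 0 := by
  intro X hX
  set W : V := A.nabla X X + A.nabla (A.phi X) (A.phi X) with hW
  -- `φ(φX) = -X`
  have hpp : A.phi (A.phi X) = -X := by
    rw [A.phi_sq, hX, zero_smul, add_zero]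
  -- `η(φX) = 0`
  have hephi : A.eta (A.phi X) = 0 := by
    have h1 := A.phi_sq (A.phi X)
    rw [hpp, A.phi_neg'] at h1
    exact A.smul_xi_eq_zero' (left_eq_add.mp h1)
  -- From `P(X,X) = 0` : `[X,φX] = φ W`
  have hP1 := hqc X X
  rw [hX, zero_smul] at hP1
  simp only [ACMMConn.P, ACMMConn.nablaPhi] at hP1
  rw [hpp, A.nabla_neg_right'] at hP1
  have eq1 : A.bracket X (A.phi X) = A.phi W := by
    rw [← A.torsion_free, hW, A.phi_add, ← sub_eq_zero, ← hP1]
    abel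
  -- From `P(X,φX) = 0` : `φ [X,φX] = -W`
  have hP2 := hqc X (A.phi X)
  rw [hephi, zero_smul] at hP2
  simp only [ACMMConn.P, ACMMConn.nablaPhi] at hP2
  rw [hpp] at hP2
  simp only [A.phi_neg', A.nabla_neg_right', neg_neg] at hP2
  have eq2 : A.phi (A.bracket X (A.phi X)) = -W := by
    rw [← A.torsion_free, A.phi_sub', hW, ← sub_eq_zero, ← neg_eq_zero, ← hP2]
    abel
  -- hence `φ(φ W) = -W`, so `η(W) = 0` and `η(φ W) = 0`
  rw [eq1] at eq2
  have h3 := A.phi_sq (A.phi W)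
  rw [eq2, A.phi_neg'] at h3
  have hfw : A.eta (A.phi W) = 0 := A.smul_xi_eq_zero' (left_eq_add.mp h3)
  rw [eq1, hfw]
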